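/- For any independent (product) prior π₁ × π₂ and channels C₁, C₂, the posterior vulnerability of the parallel composition factorizes: V(π₁ × π₂, C₁ × C₂) = V(π₁, C₁) · V(π₂, C₂); hence the min-entropy leakage is additive: I_∞(π₁ × π₂, C₁ × C₂) = I_∞(π₁, C₁) + I_∞(π₂, C₂). -/
import Mathlib

open Finset

namespace QIF11

/-- Prior vulnerability `V(π) = max_x π[x]`. -/
noncomputable def Vmax {X : Type*} [Fintype X] [Nonempty X] (π : X → ℝ) : ℝ :=
  Finset.univ.sup' Finset.univ_nonempty π

/-- Posterior vulnerability `V(π,C) = ∑_y max_x π[x] C[x,y]`. -/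
noncomputable def Vpost {X Y : Type*} [Fintype X] [Fintype Y] [Nonempty X]
    (π : X → ℝ) (C : X → Y → ℝ) : ℝ :=
  ∑ y, Finset.univ.sup' Finset.univ_nonempty fun x => π x * C x y

/-- Min-entropy leakage `I_∞(π,C) = log (V(π,C)/V(π))` (in bits). -/
noncomputable def Iinf {X Y : Type*} [Fintype X] [Fintype Y] [Nonempty X]
    (π : X → ℝ) (C : X → Y → ℝ) : ℝ :=
  Real.logb 2 (Vpost π C / Vmax π)

noncomputable def parC {X₁ X₂ Y₁ Y₂ : Type*}
    (C₁ : X₁ → Y₁ → ℝ) (C₂ : X₂ → Y₂ → ℝ) : X₁ × X₂ → Y₁ × Y₂ → ℝ :=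
  fun p q => C₁ p.1 q.1 * C₂ p.2 q.2

noncomputable def prodPrior {X₁ X₂ : Type*} (π₁ : X₁ → ℝ) (π₂ : X₂ → ℝ) :
    X₁ × X₂ → ℝ := fun p => π₁ p.1 * π₂ p.2

lemma sup'_prod_mul {X₁ X₂ : Type*} [Fintype X₁] [Fintype X₂] [Nonempty X₁] [Nonempty X₂]
    (f : X₁ → ℝ) (g : X₂ → ℝ) (hf : ∀ x, 0 ≤ f x) (hg : ∀ x, 0 ≤ g x) :
    (Finset.univ.sup' Finset.univ_nonempty fun p : X₁ × X₂ => f p.1 * g p.2) =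
      (Finset.univ.sup' Finset.univ_nonempty f) * (Finset.univ.sup' Finset.univ_nonempty g) := by
  apply le_antisymm
  · apply Finset.sup'_le
    intro p _
    exact mul_le_mul (Finset.le_sup' f (Finset.mem_univ p.1))
      (Finset.le_sup' g (Finset.mem_univ p.2)) (hg p.2)
      (le_trans (hf p.1) (Finset.le_sup' f (Finset.mem_univ p.1)))
  · obtain ⟨x, _, hx⟩ := Finset.exists_mem_eq_sup' (Finset.univ_nonempty (α := X₁)) f
    obtain ⟨y, _, hy⟩ := Finset.exists_mem_eq_sup' (Finset.univ_nonempty (α := X₂)) g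
    rw [hx, hy]
    exact Finset.le_sup' (fun p : X₁ × X₂ => f p.1 * g p.2) (Finset.mem_univ (x, y))

lemma Vmax_pos {X : Type*} [Fintype X] [Nonempty X] (π : X → ℝ)
    (hπ1 : ∑ x, π x = 1) : 0 < Vmax π := by
  by_contra h
  push_neg at h
  have : ∑ x, π x ≤ 0 := by
    apply Finset.sum_nonpos
    intro x _
    exact le_trans (Finset.le_sup' π (Finset.mem_univ x)) h
  linarith
lemma Vmax_le_Vpost {X Y : Type*} [Fintype X] [Fintype Y] [Nonempty X]
    (π : X → ℝ) (C : X → Y → ℝ) (hC0 : ∀ x y, 0 ≤ C x y) (hC1 : ∀ x, ∑ y, C x y = 1) :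
    Vmax π ≤ Vpost π C := by
  obtain ⟨x, _, hx⟩ := Finset.exists_mem_eq_sup' (Finset.univ_nonempty (α := X)) π
  calc Vmax π = π x * 1 := by rw [Vmax, hx, mul_one]
    _ = ∑ y, π x * C x y := by rw [← Finset.mul_sum, hC1]
    _ ≤ Vpost π C := Finset.sum_le_sum fun y _ =>
        Finset.le_sup' (fun x => π x * C x y) (Finset.mem_univ x)

/-- For independent priors, posterior vulnerability factorizes and min-entropy leakage
is additive under parallel composition with distinct inputs. -/
theorem min_entropy_parallel_additive {X₁ X₂ Y₁ Y₂ : Type*}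
    [Fintype X₁] [Fintype X₂] [Fintype Y₁] [Fintype Y₂]
    [Nonempty X₁] [Nonempty X₂]
    (π₁ : X₁ → ℝ) (π₂ : X₂ → ℝ) (C₁ : X₁ → Y₁ → ℝ) (C₂ : X₂ → Y₂ → ℝ)
    (hπ₁0 : ∀ x, 0 ≤ π₁ x) (hπ₁1 : ∑ x, π₁ x = 1)
    (hπ₂0 : ∀ x, 0 ≤ π₂ x) (hπ₂1 : ∑ x, π₂ x = 1)
    (hC₁0 : ∀ x y, 0 ≤ C₁ x y) (hC₁1 : ∀ x, ∑ y, C₁ x y = 1)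
    (hC₂0 : ∀ x y, 0 ≤ C₂ x y) (hC₂1 : ∀ x, ∑ y, C₂ x y = 1) :
    Vpost (prodPrior π₁ π₂) (parC C₁ C₂) = Vpost π₁ C₁ * Vpost π₂ C₂
      ∧ Iinf (prodPrior π₁ π₂) (parC C₁ C₂) = Iinf π₁ C₁ + Iinf π₂ C₂ := by
  have hVpost : Vpost (prodPrior π₁ π₂) (parC C₁ C₂) = Vpost π₁ C₁ * Vpost π₂ C₂ := by
    unfold Vpost
    rw [Fintype.sum_prod_type, Finset.sum_mul_sum]
    apply Finset.sum_congr rfl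
    intro y₁ _
    apply Finset.sum_congr rfl
    intro y₂ _
    have : (fun p : X₁ × X₂ => prodPrior π₁ π₂ p * parC C₁ C₂ p (y₁, y₂)) =
        fun p : X₁ × X₂ => (π₁ p.1 * C₁ p.1 y₁) * (π₂ p.2 * C₂ p.2 y₂) := by
      funext p; simp [prodPrior, parC]; ring
    rw [this]
    exact sup'_prod_mul _ _ (fun x => mul_nonneg (hπ₁0 x) (hC₁0 x y₁))
      (fun x => mul_nonneg (hπ₂0 x) (hC₂0 x y₂))
  have hVmax : Vmax (prodPrior π₁ π₂) = Vmax π₁ * Vmax π₂ :=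
    sup'_prod_mul π₁ π₂ hπ₁0 hπ₂0
  refine ⟨hVpost, ?_⟩
  have hM₁ := Vmax_pos π₁ hπ₁1
  have hM₂ := Vmax_pos π₂ hπ₂1
  have hV₁ := lt_of_lt_of_le hM₁ (Vmax_le_Vpost π₁ C₁ hC₁0 hC₁1)
  have hV₂ := lt_of_lt_of_le hM₂ (Vmax_le_Vpost π₂ C₂ hC₂0 hC₂1)
  unfold Iinf
  rw [hVpost, hVmax, mul_div_mul_comm,
    Real.logb_mul (by positivity) (by positivity)]

end QIF11
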